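/- arXiv:1303.3533 — 5 statements merged into one kernel-verified Lean document; each statement's English description precedes it below -/
import Mathlib

section
/- Let (S,T) be a finite directed graph with edge weights w : S × S → ℝ. For every cycle W of (S,T) there exists a simple cycle C of (S,T) whose mean weight is less than or equal to the mean weight of W. -/
/-- A cycle `c₀, …, c_m` of the graph `(S, T)`. -/
def IsCycle {S : Type*} (T : S → S → Prop) (m : ℕ) (c : ℕ → S) : Prop :=
  (∀ i < m, T (c i) (c (i + 1))) ∧ T (c m) (c 0)

/-- The mean weight of the cycle `c₀, …, c_m`. -/
noncomputable def meanWeight {S : Type*} (w : S → S → ℝ) (m : ℕ) (c : ℕ → S) : ℝ :=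
  (∑ i ∈ Finset.range (m + 1), w (c i) (c ((i + 1) % (m + 1)))) / (m + 1)

private lemma ratio_min {a b p q : ℝ} (hp : 0 < p) (hq : 0 < q) :
    a / p ≤ (a + b) / (p + q) ∨ b / q ≤ (a + b) / (p + q) := by
  by_contra h
  push_neg at h
  obtain ⟨h1, h2⟩ := h
  rw [div_lt_div_iff₀ (by positivity) hp] at h1
  rw [div_lt_div_iff₀ (by positivity) hq] at h2
  nlinarith

/-- For every cycle `W` there is a simple cycle whose mean weight
is at most the mean weight of `W`. -/
theorem stmt_1 {S : Type*} [Fintype S] [Nonempty S] (T : S → S → Prop)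
    (w : S → S → ℝ) (m : ℕ) (c : ℕ → S) (hc : IsCycle T m c) :
    ∃ (m' : ℕ) (c' : ℕ → S), IsCycle T m' c' ∧
      (∀ i ≤ m', ∀ j ≤ m', c' i = c' j → i = j) ∧
      meanWeight w m' c' ≤ meanWeight w m c := by
  induction m using Nat.strong_induction_on generalizing c with
  | _ m IH =>
  by_cases hinj : ∀ i ≤ m, ∀ j ≤ m, c i = c j → i = j
  · exact ⟨m, c, hc, hinj, le_refl _⟩
  · push_neg at hinj
    obtain ⟨i0, hi0, j0, hj0, hceq0, hne0⟩ := hinj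
    obtain ⟨i, j, hlt, hjm, hceq⟩ : ∃ i j, i < j ∧ j ≤ m ∧ c i = c j := by
      rcases lt_or_gt_of_ne hne0 with h | h
      · exact ⟨i0, j0, h, hj0, hceq0⟩
      · exact ⟨j0, i0, h, hi0, hceq0.symm⟩
    set d := j - i with hd
    have hd1 : 1 ≤ d := by omega
    have hdm : d ≤ m := by omega
    have hm1 : 1 ≤ m := by omega
    set cA : ℕ → S := fun k => c (i + k) with hcA
    set mB := m - d with hmB
    set cB : ℕ → S := fun k => if k ≤ i then c k else c (k + d) with hcB
    -- cycle A
    have hAcyc : IsCycle T (d - 1) cA := by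
      constructor
      · intro k hk
        have : i + k + 1 = i + (k + 1) := by ring
        simpa [hcA, ← this] using hc.1 (i + k) (by omega)
      · have h1 : cA (d - 1) = c (j - 1) := by
          simp only [hcA]; congr 1; omega
        have h2 : cA 0 = c i := by simp [hcA]
        rw [h1, h2, hceq]
        have := hc.1 (j - 1) (by omega)
        have hj1 : j - 1 + 1 = j := by omega
        rwa [hj1] at this
    -- cycle B
    have hBcyc : IsCycle T mB cB := by
      constructor
      · intro k hk
        by_cases hki : k < i
        · have e1 : cB k = c k := by simp [hcB, hki.le]
          have e2 : cB (k + 1) = c (k + 1) := by simp [hcB, show k + 1 ≤ i from hki]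
          rw [e1, e2]; exact hc.1 k (by omega)
        · by_cases hki' : k = i
          · subst hki'
            have e1 : cB k = c k := by simp [hcB]
            have e2 : cB (k + 1) = c (j + 1) := by
              simp only [hcB, if_neg (by omega : ¬ k + 1 ≤ k)]
              congr 1; omega
            rw [e1, e2, hceq]
            exact hc.1 j (by omega)
          · have hki2 : i < k := by omega
            have e1 : cB k = c (k + d) := by simp [hcB, (show ¬ k ≤ i by omega)]
            have e2 : cB (k + 1) = c (k + d + 1) := by
              simp only [hcB, if_neg (by omega : ¬ k + 1 ≤ i)]
              congr 1; omega
            rw [e1, e2]; exact hc.1 (k + d) (by omega)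
      · have e0 : cB 0 = c 0 := by simp [hcB]
        by_cases hmBi : mB ≤ i
        · have hji : mB = i := by omega
          have hjm' : j = m := by omega
          have e1 : cB mB = c m := by
            simp [hcB, hmBi, hji, hceq, hjm']
          rw [e0, e1]; exact hc.2
        · have e1 : cB mB = c m := by
            simp only [hcB, if_neg hmBi]; congr 1; omega
          rw [e0, e1]; exact hc.2
    -- the weight function on the original cycle
    set g : ℕ → ℝ := fun t => w (c t) (c ((t + 1) % (m + 1))) with hg
    -- sum over A
    have hSA : (∑ k ∈ Finset.range (d - 1 + 1), w (cA k) (cA ((k + 1) % (d - 1 + 1))))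
        = ∑ t ∈ Finset.Ico i j, g t := by
      rw [Finset.sum_Ico_eq_sum_range]
      have hdd : j - i = d := rfl
      rw [hdd, show d - 1 + 1 = d by omega]
      apply Finset.sum_congr rfl
      intro k hk
      rw [Finset.mem_range] at hk
      by_cases hkd : k + 1 < d
      · have h1 : (k + 1) % d = k + 1 := Nat.mod_eq_of_lt hkd
        have h2 : (i + k + 1) % (m + 1) = i + k + 1 := Nat.mod_eq_of_lt (by omega)
        simp only [hg, hcA, h1, h2]
        rw [show i + (k + 1) = i + k + 1 by omega]
      · have hke : k = d - 1 := by omega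
        subst hke
        have h1 : (d - 1 + 1) % d = 0 := by rw [show d - 1 + 1 = d by omega]; exact Nat.mod_self d
        have h2 : i + (d - 1) = j - 1 := by omega
        have h3 : (j - 1 + 1) % (m + 1) = j := by rw [show j - 1 + 1 = j by omega]; exact Nat.mod_eq_of_lt (by omega)
        simp only [hg, hcA, h1, h2, h3, add_zero, hceq]
    -- sum over B
    have hSB : (∑ k ∈ Finset.range (mB + 1), w (cB k) (cB ((k + 1) % (mB + 1))))
        = (∑ t ∈ Finset.Ico 0 i, g t) + ∑ t ∈ Finset.Ico j (m + 1), g t := by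
      have hiB : i ≤ mB + 1 := by omega
      rw [Finset.range_eq_Ico, ← Finset.sum_Ico_consecutive _ (Nat.zero_le i) hiB]
      congr 1
      · apply Finset.sum_congr rfl
        intro k hk
        rw [Finset.mem_Ico] at hk
        have hki : k < i := hk.2
        have e1 : cB k = c k := by simp [hcB, hki.le]
        have h1 : (k + 1) % (mB + 1) = k + 1 := Nat.mod_eq_of_lt (by omega)
        have e2 : cB ((k + 1) % (mB + 1)) = c (k + 1) := by rw [h1]; simp [hcB, show k + 1 ≤ i from hki]
        have h2 : (k + 1) % (m + 1) = k + 1 := Nat.mod_eq_of_lt (by omega)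
        rw [e1, e2]
        simp only [hg, h2]
      · rw [Finset.sum_Ico_eq_sum_range, Finset.sum_Ico_eq_sum_range]
        rw [show mB + 1 - i = m + 1 - j by omega]
        apply Finset.sum_congr rfl
        intro r hr
        rw [Finset.mem_range] at hr
        have e1 : cB (i + r) = c (j + r) := by
          by_cases hr0 : r = 0
          · subst hr0; simpa [hcB] using hceq
          · simp only [hcB, if_neg (by omega : ¬ i + r ≤ i)]
            congr 1; omega
        by_cases hrlast : i + r < mB
        · have h1 : (i + r + 1) % (mB + 1) = i + r + 1 := Nat.mod_eq_of_lt (by omega)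
          have e2 : cB ((i + r + 1) % (mB + 1)) = c (j + r + 1) := by
            rw [h1]
            simp only [hcB, if_neg (by omega : ¬ i + r + 1 ≤ i)]
            congr 1; omega
          have h2 : (j + r + 1) % (m + 1) = j + r + 1 := Nat.mod_eq_of_lt (by omega)
          rw [e1, e2]
          simp only [hg, h2]
        · have hre : i + r = mB := by omega
          have hje : j + r = m := by omega
          have h1 : (i + r + 1) % (mB + 1) = 0 := by rw [hre]; exact Nat.mod_self _
          have h2 : (j + r + 1) % (m + 1) = 0 := by rw [hje]; exact Nat.mod_self _
          have e2 : cB ((i + r + 1) % (mB + 1)) = c 0 := by rw [h1]; simp [hcB]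
          rw [e1, e2]
          simp only [hg, hje, Nat.mod_self]
    -- total sum splits
    have htot : (∑ t ∈ Finset.range (m + 1), g t)
        = (∑ k ∈ Finset.range (d - 1 + 1), w (cA k) (cA ((k + 1) % (d - 1 + 1))))
          + ∑ k ∈ Finset.range (mB + 1), w (cB k) (cB ((k + 1) % (mB + 1))) := by
      rw [hSA, hSB, Finset.range_eq_Ico,
        ← Finset.sum_Ico_consecutive g (Nat.zero_le i) (by omega : i ≤ m + 1),
        ← Finset.sum_Ico_consecutive g (by omega : i ≤ j) (by omega : j ≤ m + 1)]
      ring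
    -- mean weight comparison
    have hmeanA : meanWeight w (d - 1) cA
        = (∑ k ∈ Finset.range (d - 1 + 1), w (cA k) (cA ((k + 1) % (d - 1 + 1)))) / (d : ℝ) := by
      have hcast : ((d - 1 : ℕ) : ℝ) + 1 = (d : ℝ) := by
        rw [Nat.cast_sub hd1]; push_cast; ring
      rw [meanWeight, hcast]
    have hmeanW : meanWeight w m c
        = ((∑ k ∈ Finset.range (d - 1 + 1), w (cA k) (cA ((k + 1) % (d - 1 + 1))))
          + ∑ k ∈ Finset.range (mB + 1), w (cB k) (cB ((k + 1) % (mB + 1))))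
          / ((d : ℝ) + ((mB : ℝ) + 1)) := by
      rw [meanWeight, htot]
      congr 1
      have : (d : ℝ) + ((mB : ℝ) + 1) = ((d + mB : ℕ) : ℝ) + 1 := by push_cast; ring
      rw [this, show d + mB = m by omega]
    have hmeanB : meanWeight w mB cB
        = (∑ k ∈ Finset.range (mB + 1), w (cB k) (cB ((k + 1) % (mB + 1)))) / ((mB : ℝ) + 1) :=
      rfl
    have hdpos : (0 : ℝ) < (d : ℝ) := by exact_mod_cast Nat.cast_pos.mpr (by omega : 0 < d)
    have hqpos : (0 : ℝ) < (mB : ℝ) + 1 := by positivity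
    rcases ratio_min (a := ∑ k ∈ Finset.range (d - 1 + 1), w (cA k) (cA ((k + 1) % (d - 1 + 1))))
        (b := ∑ k ∈ Finset.range (mB + 1), w (cB k) (cB ((k + 1) % (mB + 1))))
        hdpos hqpos with h | h
    · obtain ⟨m', c', hcyc', hsimp', hle'⟩ := IH (d - 1) (by omega) cA hAcyc
      exact ⟨m', c', hcyc', hsimp', le_trans hle' (by rw [hmeanA, hmeanW]; exact h)⟩
    · obtain ⟨m', c', hcyc', hsimp', hle'⟩ := IH mB (by omega) cB hBcyc
      exact ⟨m', c', hcyc', hsimp', le_trans hle' (by rw [hmeanB, hmeanW]; exact h)⟩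
end

section
/- Let (S,T) be a finite directed graph with edge weights w : S × S → ℝ that has at least one cycle, and let μ* be the minimum mean weight over all cycles of (S,T). Then for every run ρ of (S,T), liminf_{n→∞} (1/n) Σ_{i=0}^{n-1} w(ρ(i), ρ(i+1)) ≥ μ*. -/
open Filter

/-!
Let `q` be the last return of a run segment `[a, b)` to its initial state `ρ a`. The segment splits
into the closed walk `[a, q)`, the single edge `(ρ q, ρ (q + 1))`, and the segment `[q + 1, b)`,
which never visits `ρ a`. A closed walk is a cycle in the sense of `IsCycle` (no simplicity is
required), so its excess weight `∑ (w - μ*)` is nonnegative. By induction, the excess of a segment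
is at least `-(μ* - m)` times its number of distinct states, where `m ≤ min w`. Hence the first
`n` weights of a run sum to at least `n μ* - |S| (μ* - m)`, and dividing by `n` gives the bound.
-/

open Finset

section Runs

variable {S : Type*} {T : S → S → Prop} {w : S → S → ℝ} {μ : ℝ} {ρ : ℕ → S}

lemma isCycle_shift (hρ : ∀ i, T (ρ i) (ρ (i + 1))) {j m : ℕ} (hret : ρ (j + m + 1) = ρ j) :
    IsCycle T m (fun i => ρ (j + i)) :=
  ⟨fun i _ => hρ (j + i), by simpa [hret] using hρ (j + m)⟩

lemma meanWeight_shift {j m : ℕ} (hret : ρ (j + m + 1) = ρ j) :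
    meanWeight w m (fun i => ρ (j + i)) =
      (∑ i ∈ range (m + 1), w (ρ (j + i)) (ρ (j + i + 1))) / (m + 1) := by
  unfold meanWeight
  congr 1
  simp only [sum_range_succ, Nat.mod_self, add_zero, hret]
  congr 1
  refine sum_congr rfl fun i hi => ?_
  rw [Nat.mod_eq_of_lt (by simpa using hi)]
  rfl

lemma sum_sub_nonneg_of_return (hlb : ∀ m c, IsCycle T m c → μ ≤ meanWeight w m c)
    (hρ : ∀ i, T (ρ i) (ρ (i + 1))) {j k : ℕ} (hjk : j ≤ k) (hret : ρ k = ρ j) :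
    0 ≤ ∑ i ∈ Ico j k, (w (ρ i) (ρ (i + 1)) - μ) := by
  rcases hjk.eq_or_lt with rfl | hlt
  · simp
  obtain ⟨m, rfl⟩ := Nat.exists_eq_add_of_lt hlt
  have h := hlb m _ (isCycle_shift hρ hret)
  rw [meanWeight_shift hret, le_div_iff₀ (by positivity)] at h
  rw [sum_Ico_eq_sum_range, add_assoc, Nat.add_sub_cancel_left, sum_sub_distrib, sum_const,
    card_range, nsmul_eq_mul]
  push_cast
  linarith

lemma neg_mul_card_image_le_sum_sub [DecidableEq S]
    (hlb : ∀ m c, IsCycle T m c → μ ≤ meanWeight w m c) (hρ : ∀ i, T (ρ i) (ρ (i + 1)))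
    {m : ℝ} (hm : ∀ s t, m ≤ w s t) (hmμ : m ≤ μ) (a b : ℕ) :
    -((μ - m) * #((Ico a b).image ρ)) ≤ ∑ i ∈ Ico a b, (w (ρ i) (ρ (i + 1)) - μ) := by
  rcases le_or_gt b a with hba | hab
  · simp [Ico_eq_empty_of_le hba]
  set q := Nat.findGreatest (fun i => ρ i = ρ a) (b - 1)
  have haq : a ≤ q := Nat.le_findGreatest (by omega) rfl
  have hqb : q < b := (Nat.findGreatest_le _).trans_lt (by omega)
  have hret : ρ q = ρ a := Nat.findGreatest_spec (P := fun i => ρ i = ρ a) (by omega) rfl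
  have hnot : ρ a ∉ (Ico (q + 1) b).image ρ := by
    simp only [mem_image, mem_Ico, not_exists, not_and]
    rintro i ⟨hqi, hib⟩ hi
    exact Nat.findGreatest_is_greatest (P := fun i => ρ i = ρ a) (n := b - 1) (k := i)
      (by omega) (by omega) hi
  have hcard : #((Ico (q + 1) b).image ρ) + 1 ≤ #((Ico a b).image ρ) := by
    refine card_lt_card ((ssubset_iff_of_subset ?_).2 ⟨ρ a, ?_, hnot⟩)
    · exact image_subset_image (Ico_subset_Ico_left (by omega))
    · exact mem_image_of_mem ρ (left_mem_Ico.2 hab)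
  have ih := neg_mul_card_image_le_sum_sub hlb hρ hm hmμ (q + 1) b
  have hcycle := sum_sub_nonneg_of_return hlb hρ haq hret
  have hstep := hm (ρ q) (ρ (q + 1))
  have hmono : (μ - m) * (#((Ico (q + 1) b).image ρ) + 1 : ℕ) ≤ (μ - m) * #((Ico a b).image ρ) :=
    mul_le_mul_of_nonneg_left (by exact_mod_cast hcard) (sub_nonneg.2 hmμ)
  rw [← sum_Ico_consecutive _ haq hqb.le, sum_eq_sum_Ico_succ_bot hqb]
  push_cast at hmono
  linarith
termination_by b - a

lemma mul_sub_card_mul_le_sum [Fintype S]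
    (hlb : ∀ m c, IsCycle T m c → μ ≤ meanWeight w m c) (hρ : ∀ i, T (ρ i) (ρ (i + 1)))
    {m : ℝ} (hm : ∀ s t, m ≤ w s t) (hmμ : m ≤ μ) (n : ℕ) :
    n * μ - Fintype.card S * (μ - m) ≤ ∑ i ∈ range n, w (ρ i) (ρ (i + 1)) := by
  classical
  have h := neg_mul_card_image_le_sum_sub hlb hρ hm hmμ 0 n
  rw [← range_eq_Ico, sum_sub_distrib, sum_const, card_range, nsmul_eq_mul] at h
  have hcard : (μ - m) * #((range n).image ρ) ≤ (μ - m) * Fintype.card S :=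
    mul_le_mul_of_nonneg_left (by exact_mod_cast card_le_univ _) (sub_nonneg.2 hmμ)
  linarith

end Runs

lemma le_liminf_div_of_bounds {u : ℕ → ℝ} {μ C M : ℝ} (hlow : ∀ n : ℕ, n * μ - C ≤ u n)
    (hup : ∀ n : ℕ, u n ≤ n * M) :
    μ ≤ liminf (fun n : ℕ => u n / n) atTop := by
  have hlim : Tendsto (fun n : ℕ => μ - C / n) atTop (nhds μ) := by
    simpa using tendsto_const_nhds.sub (tendsto_const_div_atTop_nhds_zero_nat C)
  have hle : ∀ᶠ n : ℕ in atTop, μ - C / n ≤ u n / n := by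
    filter_upwards [eventually_gt_atTop 0] with n hn
    rw [sub_div' (by positivity), div_le_div_iff_of_pos_right (by positivity), mul_comm]
    exact hlow n
  have hcobdd : IsCoboundedUnder (· ≥ ·) atTop (fun n : ℕ => u n / n) := by
    refine isCoboundedUnder_ge_of_eventually_le atTop (x := M) ?_
    filter_upwards [eventually_gt_atTop 0] with n hn
    rw [div_le_iff₀ (by positivity), mul_comm]
    exact hup n
  calc μ = liminf (fun n : ℕ => μ - C / n) atTop := hlim.liminf_eq.symm
    _ ≤ liminf (fun n : ℕ => u n / n) atTop :=
      liminf_le_liminf hle hlim.isBoundedUnder_ge hcobdd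

theorem stmt_3_general {S : Type*} [Fintype S] (T : S → S → Prop)
    (w : S → S → ℝ) (μstar : ℝ)
    (hlb : ∀ (m : ℕ) (c : ℕ → S), IsCycle T m c → μstar ≤ meanWeight w m c)
    (ρ : ℕ → S) (hρ : ∀ i, T (ρ i) (ρ (i + 1))) :
    μstar ≤ liminf (fun n : ℕ =>
      (∑ i ∈ Finset.range n, w (ρ i) (ρ (i + 1))) / n) atTop := by
  obtain ⟨m, hm⟩ := Finite.exists_ge fun p : S × S => w p.1 p.2
  obtain ⟨M, hM⟩ := Finite.exists_le fun p : S × S => w p.1 p.2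
  refine le_liminf_div_of_bounds (M := M)
    (mul_sub_card_mul_le_sum hlb hρ (m := min m μstar)
      (fun s t => (min_le_left _ _).trans (hm (s, t))) (min_le_right _ _)) fun n => ?_
  simpa using sum_le_card_nsmul (range n) _ M fun i _ => hM (ρ i, ρ (i + 1))

/-- If `μ*` is the minimum mean weight over all cycles, then the
liminf of the average edge-weight along any run is at least `μ*`. -/
theorem stmt_3 {S : Type*} [Fintype S] [Nonempty S] (T : S → S → Prop)
    (w : S → S → ℝ) (μstar : ℝ)
    (hmem : ∃ (m : ℕ) (c : ℕ → S), IsCycle T m c ∧ meanWeight w m c = μstar)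
    (hlb : ∀ (m : ℕ) (c : ℕ → S), IsCycle T m c → μstar ≤ meanWeight w m c)
    (ρ : ℕ → S) (hρ : ∀ i, T (ρ i) (ρ (i + 1))) :
    μstar ≤ liminf (fun n : ℕ =>
      (∑ i ∈ Finset.range n, w (ρ i) (ρ (i + 1))) / n) atTop :=
  stmt_3_general T w μstar hlb ρ hρ
end

section
/- Let (S,T) be a finite directed graph, c : S → ℝ vertex costs with c(s) ≥ 0 for all s, and M ⊆ S a set of surveillance states. If (S,T) has at least one cycle visiting M, then the infimum over all cycles visiting M of the per-surveillance-cycle ratio is attained, and it is attained by a simple cycle visiting M. -/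
/-- The per-surveillance-cycle ratio of the cycle `σ₀, …, σ_m`:
total vertex cost divided by the number of visits to `M`. -/
noncomputable def psRatio {S : Type*} (c : S → ℝ) (M : Set S) (m : ℕ) (σ : ℕ → S) : ℝ :=
  (∑ i ∈ Finset.range (m + 1), c (σ i)) / ({i : ℕ | i ≤ m ∧ σ i ∈ M}.ncard : ℝ)

open Finset
open scoped Classical


lemma ncard_eq_cnt {S : Type*} (M : Set S) (m : ℕ) (σ : ℕ → S) :
    {i : ℕ | i ≤ m ∧ σ i ∈ M}.ncard = ∑ k ∈ range (m + 1), if σ k ∈ M then 1 else 0 := by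
  rw [show {i : ℕ | i ≤ m ∧ σ i ∈ M} = ↑((range (m + 1)).filter (fun k => σ k ∈ M)) by
      ext k; simp [Nat.lt_succ_iff], Set.ncard_coe_finset, Finset.card_filter]

lemma psRatio_eq {S : Type*} (c : S → ℝ) (M : Set S) (m : ℕ) (σ : ℕ → S) :
    psRatio c M m σ = (∑ k ∈ range (m + 1), c (σ k)) /
      ((∑ k ∈ range (m + 1), if σ k ∈ M then 1 else 0 : ℕ) : ℝ) := by
  rw [psRatio, ncard_eq_cnt]

lemma vis_of_cnt_pos {S : Type*} {M : Set S} {m : ℕ} {σ : ℕ → S}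
    (h : 0 < ∑ k ∈ range (m + 1), if σ k ∈ M then 1 else 0) : ∃ k ≤ m, σ k ∈ M := by
  by_contra hn
  push_neg at hn
  rw [Finset.sum_eq_zero] at h
  · omega
  · intro k hk
    rw [if_neg (hn k (Nat.lt_succ_iff.mp (mem_range.mp hk)))]

lemma cnt_pos_of_vis {S : Type*} {M : Set S} {m : ℕ} {σ : ℕ → S}
    (h : ∃ k ≤ m, σ k ∈ M) : 0 < ∑ k ∈ range (m + 1), if σ k ∈ M then 1 else 0 := by
  obtain ⟨k, hk, hkM⟩ := h
  calc 0 < (if σ k ∈ M then 1 else 0) := by rw [if_pos hkM]; omega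
    _ ≤ _ := Finset.single_le_sum (f := fun k => if σ k ∈ M then 1 else 0)
        (fun _ _ => by positivity) (mem_range.mpr (Nat.lt_succ_iff.mpr hk))

lemma mediant {a b : ℝ} {p q : ℕ} (ha : 0 ≤ a) (hb : 0 ≤ b) (hp : 0 < p) (hq : 0 < q) :
    a / p ≤ (a + b) / ((p + q : ℕ) : ℝ) ∨ b / q ≤ (a + b) / ((p + q : ℕ) : ℝ) := by
  have hp' : (0:ℝ) < p := by exact_mod_cast hp
  have hq' : (0:ℝ) < q := by exact_mod_cast hq
  have hpq' : (0:ℝ) < ((p + q : ℕ) : ℝ) := by positivity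
  rcases le_total (a / p) (b / q) with h | h
  · left
    rw [div_le_div_iff₀ hp' hq'] at h
    rw [div_le_div_iff₀ hp' hpq']
    push_cast
    nlinarith
  · right
    rw [div_le_div_iff₀ hq' hp'] at h
    rw [div_le_div_iff₀ hq' hpq']
    push_cast
    nlinarith

lemma psRatio_congr {S : Type*} (c : S → ℝ) (M : Set S) (m : ℕ) {σ σ' : ℕ → S}
    (h : ∀ k ≤ m, σ k = σ' k) : psRatio c M m σ = psRatio c M m σ' := by
  rw [psRatio_eq, psRatio_eq]
  congr 1
  · exact Finset.sum_congr rfl fun k hk => by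
      rw [h k (Nat.lt_succ_iff.mp (mem_range.mp hk))]
  · norm_cast
    exact Finset.sum_congr rfl fun k hk => by
      rw [h k (Nat.lt_succ_iff.mp (mem_range.mp hk))]

open Finset

lemma sum_split {α : Type*} [AddCommMonoid α] (h : ℕ → α) (i j m : ℕ) (hij : i < j) (hjm : j ≤ m) :
    ∑ k ∈ range (m + 1), h k =
      (∑ k ∈ range (j - i - 1 + 1), h (i + k)) +
      ∑ k ∈ range (m - (j - i) + 1), (if k < i then h k else h (k + (j - i))) := by
  have h1 : ∑ k ∈ range (j - i - 1 + 1), h (i + k) = ∑ k ∈ Ico i j, h k := by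
    rw [Finset.sum_Ico_eq_sum_range, show j - i - 1 + 1 = j - i by omega]
  have h2 : ∑ k ∈ range (m - (j - i) + 1), (if k < i then h k else h (k + (j - i))) =
      (∑ k ∈ Ico 0 i, h k) + ∑ k ∈ Ico j (m + 1), h k := by
    rw [range_eq_Ico, ← Finset.sum_Ico_consecutive _ (Nat.zero_le i) (by omega : i ≤ m - (j - i) + 1)]
    congr 1
    · exact Finset.sum_congr rfl fun k hk => by
        rw [if_pos (mem_Ico.mp hk).2]
    · rw [Finset.sum_Ico_eq_sum_range, Finset.sum_Ico_eq_sum_range]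
      rw [show m - (j - i) + 1 - i = m + 1 - j by omega]
      refine Finset.sum_congr rfl fun k hk => ?_
      rw [if_neg (by omega)]
      congr 1
      omega
  rw [h1, h2, range_eq_Ico, ← Finset.sum_Ico_consecutive _ (Nat.zero_le i) (by omega : i ≤ m + 1),
    ← Finset.sum_Ico_consecutive _ (by omega : i ≤ j) (by omega : j ≤ m + 1)]
  abel

lemma extract {S : Type*} (T : S → S → Prop) (c : S → ℝ) (hc : ∀ s, 0 ≤ c s) (M : Set S) :
    ∀ m σ, IsCycle T m σ → (∃ i ≤ m, σ i ∈ M) →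
    ∃ m' σ', IsCycle T m' σ' ∧ (∃ i ≤ m', σ' i ∈ M) ∧
      (∀ i ≤ m', ∀ j ≤ m', σ' i = σ' j → i = j) ∧
      psRatio c M m' σ' ≤ psRatio c M m σ := by
  intro m
  induction m using Nat.strong_induction_on with
  | _ m IH =>
  intro σ hcyc hvis
  by_cases hinj : ∀ i ≤ m, ∀ j ≤ m, σ i = σ j → i = j
  · exact ⟨m, σ, hcyc, hvis, hinj, le_refl _⟩
  · push_neg at hinj
    obtain ⟨i0, hi0, j0, hj0, hσ0, hne0⟩ := hinj
    obtain ⟨i, j, hij, hjm, hσij⟩ : ∃ i j, i < j ∧ j ≤ m ∧ σ i = σ j := by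
      rcases hne0.lt_or_gt with h | h
      · exact ⟨i0, j0, h, hj0, hσ0⟩
      · exact ⟨j0, i0, h, hi0, hσ0.symm⟩
    obtain ⟨h1, h2⟩ := hcyc
    set d := j - i with hd
    set m₁ := j - i - 1 with hm₁
    set m₂ := m - (j - i) with hm₂
    set σ₁ : ℕ → S := fun k => σ (i + k) with hσ₁
    set σ₂ : ℕ → S := fun k => if k < i then σ k else σ (k + (j - i)) with hσ₂
    have hcyc₁ : IsCycle T m₁ σ₁ := by
      constructor
      · intro k hk
        have : i + k < m := by omega
        exact h1 _ this
      · show T (σ (i + m₁)) (σ (i + 0))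
        have hj1 : j - 1 < m := by omega
        have := h1 (j - 1) hj1
        rw [show j - 1 + 1 = j by omega] at this
        rw [show i + m₁ = j - 1 by omega, show i + 0 = i from rfl, hσij]
        exact this
    have hcyc₂ : IsCycle T m₂ σ₂ := by
      constructor
      · intro k hk
        by_cases h' : k + 1 < i
        · show T (σ₂ k) (σ₂ (k + 1))
          rw [hσ₂]
          simp only
          rw [if_pos (by omega), if_pos h']
          exact h1 k (by omega)
        · by_cases h'' : k < i
          · -- k + 1 = i
            show T (σ₂ k) (σ₂ (k + 1))
            rw [hσ₂]; simp only
            rw [if_pos h'', if_neg h']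
            have hi1 : k + 1 = i := by omega
            rw [show k + 1 + (j - i) = j by omega, ← hσij, ← hi1]
            exact h1 k (by omega)
          · show T (σ₂ k) (σ₂ (k + 1))
            rw [hσ₂]; simp only
            rw [if_neg h'', if_neg (by omega)]
            rw [show k + 1 + (j - i) = (k + (j - i)) + 1 by omega]
            exact h1 _ (by omega)
      · show T (σ₂ m₂) (σ₂ 0)
        rw [hσ₂]; simp only
        rw [if_neg (by omega), show m₂ + (j - i) = m by omega]
        by_cases hi : 0 < i
        · rw [if_pos hi]; exact h2
        · rw [if_neg hi, show 0 + (j - i) = j by omega, ← hσij,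
            show i = 0 by omega]
          exact h2
    have hsum := sum_split (fun k => c (σ k)) i j m hij hjm
    have hcnt := sum_split (fun k => if σ k ∈ M then 1 else 0) i j m hij hjm
    set A := ∑ k ∈ Finset.range (m₁ + 1), c (σ₁ k) with hA
    set B := ∑ k ∈ Finset.range (m₂ + 1), c (σ₂ k) with hB
    set p := ∑ k ∈ Finset.range (m₁ + 1), if σ₁ k ∈ M then 1 else 0 with hp
    set q := ∑ k ∈ Finset.range (m₂ + 1), if σ₂ k ∈ M then 1 else 0 with hq
    have hAB : ∑ k ∈ Finset.range (m + 1), c (σ k) = A + B := by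
      rw [hsum, hA, hB]
      congr 1
      exact Finset.sum_congr rfl fun k _ => (apply_ite c _ _ _).symm
    have hpq : (∑ k ∈ Finset.range (m + 1), if σ k ∈ M then 1 else 0) = p + q := by
      rw [hcnt, hp, hq]
      congr 1
      refine Finset.sum_congr rfl fun k _ => ?_
      rw [hσ₂]; simp only
      by_cases h' : k < i <;> simp [h']
    have hAnn : 0 ≤ A := Finset.sum_nonneg fun k _ => hc _
    have hBnn : 0 ≤ B := Finset.sum_nonneg fun k _ => hc _
    have hPQ : 0 < p + q := by rw [← hpq]; exact cnt_pos_of_vis hvis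
    have hR : psRatio c M m σ = (A + B) / ((p + q : ℕ) : ℝ) := by
      rw [psRatio_eq, hAB, hpq]
    have hR₁ : psRatio c M m₁ σ₁ = A / (p : ℝ) := psRatio_eq c M m₁ σ₁
    have hR₂ : psRatio c M m₂ σ₂ = B / (q : ℝ) := psRatio_eq c M m₂ σ₂
    rcases Nat.eq_zero_or_pos p with hp0 | hp0
    · have hq0 : 0 < q := by omega
      have hvis₂ : ∃ k ≤ m₂, σ₂ k ∈ M := vis_of_cnt_pos hq0
      have hle : psRatio c M m₂ σ₂ ≤ psRatio c M m σ := by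
        rw [hR, hR₂, hp0, zero_add]
        have : (0:ℝ) < q := by exact_mod_cast hq0
        gcongr
        linarith
      obtain ⟨m', σ', ha1, ha2, ha3, ha4⟩ := IH m₂ (by omega) σ₂ hcyc₂ hvis₂
      exact ⟨m', σ', ha1, ha2, ha3, ha4.trans hle⟩
    · rcases Nat.eq_zero_or_pos q with hq0 | hq0
      · have hvis₁ : ∃ k ≤ m₁, σ₁ k ∈ M := vis_of_cnt_pos hp0
        have hle : psRatio c M m₁ σ₁ ≤ psRatio c M m σ := by
          rw [hR, hR₁, hq0, add_zero]
          have : (0:ℝ) < p := by exact_mod_cast hp0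
          gcongr
          linarith
        obtain ⟨m', σ', ha1, ha2, ha3, ha4⟩ := IH m₁ (by omega) σ₁ hcyc₁ hvis₁
        exact ⟨m', σ', ha1, ha2, ha3, ha4.trans hle⟩
      · rcases mediant hAnn hBnn hp0 hq0 with h | h
        · have hvis₁ : ∃ k ≤ m₁, σ₁ k ∈ M := vis_of_cnt_pos hp0
          obtain ⟨m', σ', ha1, ha2, ha3, ha4⟩ := IH m₁ (by omega) σ₁ hcyc₁ hvis₁
          exact ⟨m', σ', ha1, ha2, ha3, ha4.trans (by rw [hR₁] at *; rw [hR]; exact h)⟩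
        · have hvis₂ : ∃ k ≤ m₂, σ₂ k ∈ M := vis_of_cnt_pos hq0
          obtain ⟨m', σ', ha1, ha2, ha3, ha4⟩ := IH m₂ (by omega) σ₂ hcyc₂ hvis₂
          exact ⟨m', σ', ha1, ha2, ha3, ha4.trans (by rw [hR₂] at *; rw [hR]; exact h)⟩

/-- If there is a cycle visiting `M`, then the infimum of the
per-surveillance-cycle ratio over all cycles visiting `M` is attained by a
simple cycle visiting `M`. -/
theorem stmt_4 {S : Type*} [Fintype S] [Nonempty S] (T : S → S → Prop)
    (c : S → ℝ) (hc : ∀ s, 0 ≤ c s) (M : Set S)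
    (hcyc : ∃ (m : ℕ) (σ : ℕ → S), IsCycle T m σ ∧ ∃ i ≤ m, σ i ∈ M) :
    ∃ (m : ℕ) (σ : ℕ → S), IsCycle T m σ ∧ (∃ i ≤ m, σ i ∈ M) ∧
      (∀ i ≤ m, ∀ j ≤ m, σ i = σ j → i = j) ∧
      ∀ (m' : ℕ) (σ' : ℕ → S), IsCycle T m' σ' → (∃ i ≤ m', σ' i ∈ M) →
        psRatio c M m σ ≤ psRatio c M m' σ' := by
  classical
  set N := Fintype.card S with hN
  have hN0 : 0 < N := Fintype.card_pos
  -- simple cycles are short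
  have hshort : ∀ (m : ℕ) (σ : ℕ → S), (∀ i ≤ m, ∀ j ≤ m, σ i = σ j → i = j) → m < N := by
    intro m σ hinj
    have hcard : ((Finset.range (m + 1)).image σ).card = m + 1 := by
      rw [Finset.card_image_of_injOn, Finset.card_range]
      intro a ha b hb hab
      exact hinj a (Nat.lt_succ_iff.mp (Finset.mem_range.mp ha))
        b (Nat.lt_succ_iff.mp (Finset.mem_range.mp hb)) hab
    have := Finset.card_le_univ ((Finset.range (m + 1)).image σ)
    rw [hcard] at this
    omega
  set Q : Set ℝ := {r | ∃ m σ, IsCycle T m σ ∧ (∃ i ≤ m, σ i ∈ M) ∧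
    (∀ i ≤ m, ∀ j ≤ m, σ i = σ j → i = j) ∧ r = psRatio c M m σ} with hQ
  set g : Fin N × (Fin N → S) → ℝ :=
    fun z => psRatio c M z.1 (fun k => z.2 ⟨k % N, Nat.mod_lt _ hN0⟩) with hg
  have hQsub : Q ⊆ Set.range g := by
    rintro r ⟨m, σ, hcy, hv, hinj, rfl⟩
    have hm : m < N := hshort m σ hinj
    refine ⟨⟨⟨m, hm⟩, fun a => σ a⟩, ?_⟩
    rw [hg]
    exact (psRatio_congr c M m fun k hk => by
      simp only
      congr 1
      exact (Nat.mod_eq_of_lt (by omega)).symm).symm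
  have hQfin : Q.Finite := (Set.finite_range g).subset hQsub
  have hQne : Q.Nonempty := by
    obtain ⟨m, σ, hcy, hv⟩ := hcyc
    obtain ⟨m', σ', ha1, ha2, ha3, _⟩ := extract T c hc M m σ hcy hv
    exact ⟨psRatio c M m' σ', m', σ', ha1, ha2, ha3, rfl⟩
  obtain ⟨r₀, hr₀Q, hr₀min⟩ := Set.exists_min_image Q id hQfin hQne
  obtain ⟨m₀, σ₀, hc₀, hv₀, hinj₀, hr₀⟩ := hr₀Q
  refine ⟨m₀, σ₀, hc₀, hv₀, hinj₀, fun m' σ' hcy' hv' => ?_⟩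
  obtain ⟨m'', σ'', hb1, hb2, hb3, hb4⟩ := extract T c hc M m' σ' hcy' hv'
  have : r₀ ≤ psRatio c M m'' σ'' :=
    hr₀min _ ⟨m'', σ'', hb1, hb2, hb3, rfl⟩
  rw [hr₀] at this
  exact this.trans hb4
end

section
/- Let S be a finite nonempty set, let w : S × S → [0,∞] be extended edge weights (w(a,b) = ∞ encodes absence of an edge), and let u ∈ S. Define S' = S \ {u} and w' : S' × S' → [0,∞] by w'(a,b) = min( w(a,b), w(a,u) + w(u,b) ). Then for all a, b ∈ S', the infimum over all finite sequences a = v₀, v₁, …, v_n = b with n ≥ 1 and all v_i ∈ S of Σ_{i<n} w(v_i, v_{i+1}) equals the infimum over all finite sequences a = v₀, v₁, …, v_n = b with n ≥ 1 and all v_i ∈ S' of Σ_{i<n} w'(v_i, v_{i+1}). That is, eliminating the state u while adding shortcut weights through u preserves minimum connection weights between all remaining states. -/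
open ENNReal

/-! Each shortcut edge `min (w a b) (w a u + w u b)` is the weight of a walk of length one or two in
`w`, so every walk in the reduced graph is dominated by a walk in the original one. Conversely, a
walk in the original graph between states other than `u` splits at its visits to `u`; each
excursion `a → u → ⋯ → u → b` costs at least `w a u + w u b`, hence at least the shortcut weight
of `a → b`. -/

inductive IsWalkWeight {T : Type*} (f : T → T → ℝ≥0∞) : T → T → ℝ≥0∞ → Prop
  | edge (a b : T) : IsWalkWeight f a b (f a b)
  | cons (a : T) {b c : T} {x : ℝ≥0∞} : IsWalkWeight f b c x → IsWalkWeight f a c (f a b + x)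

namespace IsWalkWeight

variable {T : Type*} {f : T → T → ℝ≥0∞}

theorem of_sum_range {n : ℕ} (hn : 1 ≤ n) (v : ℕ → T) :
    IsWalkWeight f (v 0) (v n) (∑ i ∈ Finset.range n, f (v i) (v (i + 1))) := by
  induction n, hn using Nat.le_induction generalizing v with
  | base => simpa using edge (f := f) (v 0) (v 1)
  | succ n hn ih =>
    rw [Finset.sum_range_succ']
    simpa [add_comm] using cons (v 0) (ih fun i ↦ v (i + 1))

theorem exists_sum_range {a b : T} {x : ℝ≥0∞} (h : IsWalkWeight f a b x) :
    ∃ n, 1 ≤ n ∧ ∃ v : ℕ → T, v 0 = a ∧ v n = b ∧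
      x = ∑ i ∈ Finset.range n, f (v i) (v (i + 1)) := by
  induction h with
  | edge a b => exact ⟨1, le_rfl, fun i ↦ if i = 0 then a else b, by simp⟩
  | cons a _ ih =>
    obtain ⟨n, hn, v, rfl, hvn, rfl⟩ := ih
    refine ⟨n + 1, by omega, fun i ↦ Nat.casesOn i a v, rfl, hvn, ?_⟩
    rw [Finset.sum_range_succ', add_comm]
    rfl

theorem iff_exists_sum_range {a b : T} {x : ℝ≥0∞} :
    IsWalkWeight f a b x ↔ ∃ n, 1 ≤ n ∧ ∃ v : ℕ → T, v 0 = a ∧ v n = b ∧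
      x = ∑ i ∈ Finset.range n, f (v i) (v (i + 1)) :=
  ⟨exists_sum_range, fun ⟨_, hn, v, hv0, hvn, hx⟩ ↦ hv0 ▸ hvn ▸ hx ▸ of_sum_range hn v⟩

end IsWalkWeight

section Elimination

variable {S : Type*} (w : S → S → ℝ≥0∞) (u : S)

def shortcutWeight (a b : {s : S // s ≠ u}) : ℝ≥0∞ :=
  min (w a b) (w a u + w u b)

variable {w u}

theorem shortcutWeight_le_left (a b : {s : S // s ≠ u}) : shortcutWeight w u a b ≤ w a b :=
  min_le_left _ _

theorem shortcutWeight_le_right (a b : {s : S // s ≠ u}) :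
    shortcutWeight w u a b ≤ w a u + w u b :=
  min_le_right _ _

theorem IsWalkWeight.exists_le_shortcutWeight_add {b c : S} {y : ℝ≥0∞}
    (h : IsWalkWeight w b c y) (a : {s : S // s ≠ u}) (hb : b ≠ u) :
    ∃ z, IsWalkWeight w a c z ∧ z ≤ shortcutWeight w u a ⟨b, hb⟩ + y := by
  rcases min_cases (w a b) (w a u + w u b) with ⟨hmin, -⟩ | ⟨hmin, -⟩
  · exact ⟨_, .cons (a : S) h, by rw [shortcutWeight, hmin]⟩
  · exact ⟨_, .cons (a : S) (.cons u h), by rw [shortcutWeight, hmin, add_assoc]⟩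

theorem IsWalkWeight.exists_le_of_shortcutWeight {a b : {s : S // s ≠ u}} {x : ℝ≥0∞}
    (h : IsWalkWeight (shortcutWeight w u) a b x) : ∃ y, IsWalkWeight w a b y ∧ y ≤ x := by
  induction h with
  | edge a b =>
    rcases min_cases (w a b) (w a u + w u b) with ⟨hmin, -⟩ | ⟨hmin, -⟩
    · exact ⟨_, .edge (a : S) b, by rw [shortcutWeight, hmin]⟩
    · exact ⟨_, .cons (a : S) (.edge u b), by rw [shortcutWeight, hmin]⟩
  | @cons a b c x _ ih =>
    obtain ⟨y, hy, hyx⟩ := ih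
    obtain ⟨z, hz, hzy⟩ := hy.exists_le_shortcutWeight_add a b.2
    exact ⟨z, hz, hzy.trans (by gcongr)⟩

/-- The induction is over walks ending off `u` but possibly starting at `u`; such a walk is
compressed together with an arbitrary incoming edge `a → u`. -/
theorem IsWalkWeight.exists_shortcutWeight_le {s c : S} {x : ℝ≥0∞} (h : IsWalkWeight w s c x)
    (hc : c ≠ u) :
    (∀ hs : s ≠ u, ∃ y, IsWalkWeight (shortcutWeight w u) ⟨s, hs⟩ ⟨c, hc⟩ y ∧ y ≤ x) ∧
      (s = u → ∀ a : {s : S // s ≠ u},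
        ∃ y, IsWalkWeight (shortcutWeight w u) a ⟨c, hc⟩ y ∧ y ≤ w a u + x) := by
  induction h with
  | edge s c =>
    refine ⟨fun hs ↦ ⟨_, .edge _ _, shortcutWeight_le_left _ _⟩, ?_⟩
    rintro rfl a
    exact ⟨_, .edge _ _, shortcutWeight_le_right _ _⟩
  | @cons s b c x _ ih =>
    obtain ⟨ihb, ihu⟩ := ih hc
    by_cases hb : b = u
    · subst hb
      refine ⟨fun hs ↦ ihu rfl ⟨s, hs⟩, ?_⟩
      rintro rfl a
      obtain ⟨y, hy, hyx⟩ := ihu rfl a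
      exact ⟨y, hy, hyx.trans (by gcongr; exact le_add_self)⟩
    · obtain ⟨y, hy, hyx⟩ := ihb hb
      refine ⟨fun hs ↦ ⟨_, .cons _ hy, add_le_add (shortcutWeight_le_left _ _) hyx⟩, ?_⟩
      rintro rfl a
      exact ⟨_, .cons _ hy, by
        rw [← add_assoc]; exact add_le_add (shortcutWeight_le_right a ⟨b, hb⟩) hyx⟩

theorem sInf_isWalkWeight_eq_shortcutWeight (a b : {s : S // s ≠ u}) :
    sInf {x | IsWalkWeight w a b x} = sInf {x | IsWalkWeight (shortcutWeight w u) a b x} :=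
  le_antisymm
    (sInf_le_sInf_of_isCoinitialFor fun _ hx ↦ IsWalkWeight.exists_le_of_shortcutWeight hx)
    (sInf_le_sInf_of_isCoinitialFor fun _ (hx : IsWalkWeight w a b _) ↦
      (hx.exists_shortcutWeight_le b.2).1 a.2)

end Elimination

theorem stmt_10_general {S : Type*} (w : S → S → ℝ≥0∞) (u : S) :
    ∀ a b : {s : S // s ≠ u},
      sInf {x : ℝ≥0∞ | ∃ n : ℕ, 1 ≤ n ∧ ∃ v : ℕ → S, v 0 = a.val ∧ v n = b.val ∧
          x = ∑ i ∈ Finset.range n, w (v i) (v (i + 1))} =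
      sInf {x : ℝ≥0∞ | ∃ n : ℕ, 1 ≤ n ∧ ∃ v : ℕ → {s : S // s ≠ u}, v 0 = a ∧ v n = b ∧
          x = ∑ i ∈ Finset.range n,
            min (w (v i).val (v (i + 1)).val)
              (w (v i).val u + w u (v (i + 1)).val)} := by
  intro a b
  simpa only [IsWalkWeight.iff_exists_sum_range, shortcutWeight] using
    sInf_isWalkWeight_eq_shortcutWeight (w := w) a b

/-- Eliminating a state `u` while adding shortcut weights through
`u` preserves the minimum connection weight (infimum of walk weights, over
walks of length at least 1) between all remaining states. -/
theorem stmt_10 {S : Type*} [Fintype S] [Nonempty S] (w : S → S → ℝ≥0∞) (u : S) :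
    ∀ a b : {s : S // s ≠ u},
      sInf {x : ℝ≥0∞ | ∃ n : ℕ, 1 ≤ n ∧ ∃ v : ℕ → S, v 0 = a.val ∧ v n = b.val ∧
          x = ∑ i ∈ Finset.range n, w (v i) (v (i + 1))} =
      sInf {x : ℝ≥0∞ | ∃ n : ℕ, 1 ≤ n ∧ ∃ v : ℕ → {s : S // s ≠ u}, v 0 = a ∧ v n = b ∧
          x = ∑ i ∈ Finset.range n,
            min (w (v i).val (v (i + 1)).val)
              (w (v i).val u + w u (v (i + 1)).val)} :=
  stmt_10_general w u
end

section
/- Let (S,T) be a finite directed graph, c : S → ℝ vertex costs with c(s) ≥ 0 for all s, M ⊆ S a set of surveillance states, F ⊆ S a set of accepting states, and s₀ ∈ S. Suppose κ = c₀, …, c_m is a cycle visiting M with per-surveillance-cycle ratio γ, and f ∈ F is such that: there is a finite run from s₀ to c₀, there is a finite run from some state of κ to f, and there is a finite run from f to some state of κ. Then there exists a run ρ with ρ(0) = s₀ such that ρ(i) ∈ F for infinitely many i, ρ(i) ∈ M for infinitely many i, and limsup_{n→∞} (Σ_{i=0}^{n} c(ρ(i))) / #{i ∈ {0,…,n} :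 ρ(i) ∈ M} ≤ γ. -/
open Filter

namespace Stmt14Aux

variable {S : Type*} (T : S → S → Prop)

/-- `σ 0, …, σ n` is a `T`-path. -/
def IsPath (n : ℕ) (σ : ℕ → S) : Prop := ∀ i < n, T (σ i) (σ (i + 1))

/-- concatenation of paths -/
def cat (n : ℕ) (σ τ : ℕ → S) : ℕ → S := fun i => if i < n then σ i else τ (i - n)

variable {T}

lemma cat_left {n : ℕ} {σ τ : ℕ → S} {i : ℕ} (h : i < n) : cat n σ τ i = σ i := if_pos h

lemma cat_right (n : ℕ) (σ τ : ℕ → S) (i : ℕ) : cat n σ τ (n + i) = τ i := by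
  simp [cat, Nat.add_sub_cancel_left]

lemma cat_zero {n : ℕ} {σ τ : ℕ → S} (h : τ 0 = σ n) : cat n σ τ 0 = σ 0 := by
  rcases Nat.eq_zero_or_pos n with h0 | h0
  · subst h0; simpa [cat] using h
  · exact if_pos h0

lemma cat_isPath {n k : ℕ} {σ τ : ℕ → S} (hσ : IsPath T n σ) (hτ : IsPath T k τ)
    (h : τ 0 = σ n) : IsPath T (n + k) (cat n σ τ) := by
  intro i hi
  rcases lt_or_ge i n with h1 | h1
  · rw [cat_left h1]
    rcases lt_or_ge (i + 1) n with h2 | h2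
    · rw [cat_left h2]; exact hσ i h1
    · have : i + 1 = n := le_antisymm h1 h2
      subst this
      have : cat (i+1) σ τ (i+1) = σ (i+1) := by
        simp [cat, h]
      rw [this]; exact hσ i h1
  · obtain ⟨r, rfl⟩ := Nat.exists_eq_add_of_le h1
    rw [cat_right]
    have : n + r + 1 = n + (r + 1) := by ring
    rw [this, cat_right]
    exact hτ r (by omega)

lemma sum_cat (g : S → ℝ) (n k : ℕ) (σ τ : ℕ → S) :
    ∑ i ∈ Finset.range (n + k), g (cat n σ τ i)
      = ∑ i ∈ Finset.range n, g (σ i) + ∑ i ∈ Finset.range k, g (τ i) := by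
  rw [Finset.sum_range_add]
  congr 1
  · exact Finset.sum_congr rfl fun i hi => by
      rw [cat_left (Finset.mem_range.mp hi)]
  · exact Finset.sum_congr rfl fun i _ => by rw [cat_right]

/-- periodic sums -/
lemma sum_mod (h : ℕ → ℝ) (P k : ℕ) :
    ∑ r ∈ Finset.range (k * P), h (r % P) = (k : ℝ) * ∑ i ∈ Finset.range P, h i := by
  induction k with
  | zero => simp
  | succ k ih =>
    have : (k + 1) * P = k * P + P := by ring
    rw [this, Finset.sum_range_add, ih]
    have : ∑ i ∈ Finset.range P, h ((k * P + i) % P) = ∑ i ∈ Finset.range P, h i := by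
      refine Finset.sum_congr rfl fun i hi => ?_
      have : (k * P + i) % P = i := by
        rw [add_comm, Nat.add_mul_mod_self_right, Nat.mod_eq_of_lt (Finset.mem_range.mp hi)]
      rw [this]
    rw [this]; push_cast; ring

/-- The block scheduler. -/
def sch (len : ℕ → ℕ) : ℕ → ℕ × ℕ
  | 0 => (0, 0)
  | n + 1 =>
      if (sch len n).2 + 1 < len (sch len n).1 then ((sch len n).1, (sch len n).2 + 1)
      else ((sch len n).1 + 1, 0)

/-- cumulative lengths -/
def cum (len : ℕ → ℕ) (j : ℕ) : ℕ := ∑ t ∈ Finset.range j, len t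

/-- the concatenated infinite run -/
def runOf (len : ℕ → ℕ) (seg : ℕ → ℕ → S) (n : ℕ) : S :=
  seg (sch len n).1 (sch len n).2

variable {len : ℕ → ℕ}

lemma sch_inner {j n0 : ℕ} (h0 : sch len n0 = (j, 0)) :
    ∀ r < len j, sch len (n0 + r) = (j, r) := by
  intro r
  induction r with
  | zero => intro _; simpa using h0
  | succ r ih =>
    intro hr
    have hr' : r < len j := Nat.lt_of_succ_lt hr
    have hn : sch len (n0 + r) = (j, r) := ih hr'
    show sch len ((n0 + r) + 1) = (j, r + 1)
    rw [sch, hn]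
    simp [hr]

lemma sch_cum (hlen : ∀ j, 0 < len j) : ∀ j, sch len (cum len j) = (j, 0) := by
  intro j
  induction j with
  | zero => simp [cum, sch]
  | succ j ihj =>
    have h1 : len j - 1 < len j := Nat.sub_lt (hlen j) one_pos
    have h2 := sch_inner ihj (len j - 1) h1
    have e : cum len (j + 1) = (cum len j + (len j - 1)) + 1 := by
      have := hlen j
      unfold cum
      rw [Finset.sum_range_succ]
      omega
    rw [e, sch, h2]
    have : ¬ (len j - 1 + 1 < len j) := by omega
    simp [this]

lemma sch_eq (hlen : ∀ j, 0 < len j) {j r : ℕ} (hr : r < len j) :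
    sch len (cum len j + r) = (j, r) :=
  sch_inner (sch_cum hlen j) r hr

lemma runOf_at (hlen : ∀ j, 0 < len j) (seg : ℕ → ℕ → S) {j r : ℕ} (hr : r < len j) :
    runOf len seg (cum len j + r) = seg j r := by
  unfold runOf; rw [sch_eq hlen hr]

lemma exists_decomp (hlen : ∀ j, 0 < len j) (n : ℕ) :
    ∃ j r, r < len j ∧ n = cum len j + r := by
  induction n with
  | zero => exact ⟨0, 0, hlen 0, by simp [cum]⟩
  | succ n ih =>
    obtain ⟨j, r, hr, rfl⟩ := ih
    rcases lt_or_ge (r + 1) (len j) with h | h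
    · exact ⟨j, r + 1, h, rfl⟩
    · have hr1 : r + 1 = len j := by omega
      refine ⟨j + 1, 0, hlen _, ?_⟩
      have : cum len (j + 1) = cum len j + len j := Finset.sum_range_succ _ _
      omega

lemma cum_mono {j j' : ℕ} (h : j ≤ j') : cum len j ≤ cum len j' :=
  Finset.sum_le_sum_of_subset (Finset.range_subset_range.mpr h)

lemma le_cum (hlen : ∀ j, 0 < len j) (j : ℕ) : j ≤ cum len j := by
  calc j = ∑ _t ∈ Finset.range j, 1 := by simp
  _ ≤ cum len j := Finset.sum_le_sum fun i _ => hlen i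

lemma runOf_isRun (hlen : ∀ j, 0 < len j) {seg : ℕ → ℕ → S}
    (hpath : ∀ j, IsPath T (len j) (seg j))
    (hglue : ∀ j, seg (j + 1) 0 = seg j (len j)) :
    ∀ n, T (runOf len seg n) (runOf len seg (n + 1)) := by
  intro n
  obtain ⟨j, r, hr, rfl⟩ := exists_decomp hlen n
  rw [runOf_at hlen seg hr]
  rcases lt_or_ge (r + 1) (len j) with h | h
  · have : cum len j + r + 1 = cum len j + (r + 1) := by ring
    rw [this, runOf_at hlen seg h]
    exact hpath j r hr
  · have hr1 : r + 1 = len j := by omega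
    have e : cum len j + r + 1 = cum len (j + 1) + 0 := by
      have : cum len (j + 1) = cum len j + len j := Finset.sum_range_succ _ _
      omega
    rw [e, runOf_at hlen seg (hlen (j + 1)), hglue, ← hr1]
    exact hpath j r hr

lemma sum_runOf (hlen : ∀ j, 0 < len j) (seg : ℕ → ℕ → S) (g : S → ℝ) (j : ℕ) :
    ∑ i ∈ Finset.range (cum len j), g (runOf len seg i)
      = ∑ t ∈ Finset.range j, ∑ r ∈ Finset.range (len t), g (seg t r) := by
  induction j with
  | zero => simp [cum]
  | succ j ih =>
    have e : cum len (j + 1) = cum len j + len j := Finset.sum_range_succ _ _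
    rw [e, Finset.sum_range_add, ih, Finset.sum_range_succ]
    congr 1
    exact Finset.sum_congr rfl fun r hr => by
      rw [runOf_at hlen seg (Finset.mem_range.mp hr)]

lemma sum_comp_mono {ρ : ℕ → S} {g : S → ℝ} (hg : ∀ s, 0 ≤ g s) {a b : ℕ} (h : a ≤ b) :
    ∑ i ∈ Finset.range a, g (ρ i) ≤ ∑ i ∈ Finset.range b, g (ρ i) :=
  Finset.sum_le_sum_of_subset_of_nonneg (Finset.range_subset_range.mpr h) fun i _ _ => hg _

end Stmt14Aux

set_option maxHeartbeats 1000000 in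
/-- Given a cycle `κ` visiting `M` with per-surveillance-cycle
ratio `γ`, and an accepting state `f ∈ F` reachable from `κ` and from which `κ`
is reachable, with `κ` reachable from `s₀`, there is a run from `s₀` visiting
both `F` and `M` infinitely often whose limsup cost-per-surveillance-visit
quotient is at most `γ`. -/
theorem stmt_14 {S : Type*} [Fintype S] [Nonempty S] (T : S → S → Prop)
    (c : S → ℝ) (hc : ∀ s, 0 ≤ c s) (M : Set S) (F : Set S) (s₀ : S)
    (m : ℕ) (κ : ℕ → S) (hκ : IsCycle T m κ) (hvis : ∃ i ≤ m, κ i ∈ M)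
    (γ : ℝ) (hγ : γ = psRatio c M m κ)
    (f : S) (hf : f ∈ F)
    (hreach : ∃ (n : ℕ) (σ : ℕ → S), σ 0 = s₀ ∧ σ n = κ 0 ∧
      ∀ i < n, T (σ i) (σ (i + 1)))
    (htof : ∃ i ≤ m, ∃ (n : ℕ) (σ : ℕ → S), σ 0 = κ i ∧ σ n = f ∧
      ∀ j < n, T (σ j) (σ (j + 1)))
    (hfrom : ∃ i ≤ m, ∃ (n : ℕ) (σ : ℕ → S), σ 0 = f ∧ σ n = κ i ∧
      ∀ j < n, T (σ j) (σ (j + 1))) :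
    ∃ ρ : ℕ → S, ρ 0 = s₀ ∧ (∀ i, T (ρ i) (ρ (i + 1))) ∧
      (∀ N : ℕ, ∃ i ≥ N, ρ i ∈ F) ∧
      (∀ N : ℕ, ∃ i ≥ N, ρ i ∈ M) ∧
      limsup (fun n : ℕ =>
        (∑ i ∈ Finset.range (n + 1), c (ρ i)) /
          ({i : ℕ | i ≤ n ∧ ρ i ∈ M}.ncard : ℝ)) atTop ≤ γ := by
  classical
  obtain ⟨n₀, σ₀, hσ0, hσn, hσpath⟩ := hreach
  obtain ⟨a, ha, p, π, hπ0, hπp, hπpath⟩ := htof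
  obtain ⟨b, hb, q, τ, hτ0, hτq, hτpath⟩ := hfrom
  obtain ⟨i₀, hi₀m, hi₀M⟩ := hvis
  set P := m + 1 with hP
  have hPpos : 0 < P := Nat.succ_pos m
  have cyc_step : ∀ i : ℕ, T (κ (i % P)) (κ ((i + 1) % P)) := by
    intro i
    have hmod : i % P < P := Nat.mod_lt _ hPpos
    rcases eq_or_lt_of_le (Nat.lt_succ_iff.mp hmod) with h | h
    · have h1 : (i + 1) % P = 0 := by
        rw [← Nat.mod_add_mod, h, hP, Nat.mod_self]
      rw [h1, h]
      exact hκ.2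
    · have h1 : (i + 1) % P = i % P + 1 := by
        rw [← Nat.mod_add_mod]
        exact Nat.mod_eq_of_lt (by omega)
      rw [h1]
      exact hκ.1 _ h
  set cyc : ℕ → S := fun r => κ (r % P) with hcyc
  have hcycP : ∀ k, Stmt14Aux.IsPath T k cyc := fun k i _ => cyc_step i
  have hcyc0 : cyc 0 = κ 0 := by simp [hcyc]
  have hcycmul : ∀ k, cyc (k * P) = κ 0 := fun k => by simp [hcyc, Nat.mul_mod_left]
  -- the detour through f
  set tail : ℕ → S := fun o => κ ((b + o) % P) with htail
  set d3 : ℕ → S := Stmt14Aux.cat q τ tail with hd3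
  set d2 : ℕ → S := Stmt14Aux.cat p π d3 with hd2
  set det : ℕ → S := Stmt14Aux.cat a κ d2 with hdet
  set d : ℕ := a + (p + (q + (P - b))) with hd
  have htail0 : tail 0 = κ b := by simp [htail, Nat.mod_eq_of_lt (by omega : b < P)]
  have htailend : tail (P - b) = κ 0 := by
    have : b + (P - b) = P := by omega
    simp [htail, this, Nat.mod_self]
  have htailpath : Stmt14Aux.IsPath T (P - b) tail := by
    intro o _
    show T (κ ((b + o) % P)) (κ ((b + (o + 1)) % P))
    have : b + (o + 1) = (b + o) + 1 := by omega
    rw [this]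
    exact cyc_step (b + o)
  have hd30 : d3 0 = f := by
    rw [hd3, Stmt14Aux.cat_zero (by rw [htail0, hτq]), hτ0]
  have hd3path : Stmt14Aux.IsPath T (q + (P - b)) d3 :=
    Stmt14Aux.cat_isPath hτpath htailpath (by rw [htail0, hτq])
  have hd3end : d3 (q + (P - b)) = κ 0 := by
    rw [hd3, Stmt14Aux.cat_right, htailend]
  have hd20 : d2 0 = κ a := by
    rw [hd2, Stmt14Aux.cat_zero (by rw [hd30, hπp]), hπ0]
  have hd2path : Stmt14Aux.IsPath T (p + (q + (P - b))) d2 :=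
    Stmt14Aux.cat_isPath hπpath hd3path (by rw [hd30, hπp])
  have hd2end : d2 (p + (q + (P - b))) = κ 0 := by
    rw [hd2, Stmt14Aux.cat_right]; exact hd3end
  have hd2f : d2 p = f := by
    have := Stmt14Aux.cat_right p π d3 0
    rw [hd2]
    simpa [hd30] using this
  have hdet0 : det 0 = κ 0 := by
    rw [hdet, Stmt14Aux.cat_zero (by rw [hd20])]
  have hdetpath : Stmt14Aux.IsPath T d det :=
    Stmt14Aux.cat_isPath (fun i hi => hκ.1 i (lt_of_lt_of_le hi ha)) hd2path hd20
  have hdetend : det d = κ 0 := by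
    rw [hdet, hd, Stmt14Aux.cat_right]; exact hd2end
  have hdetf : det (a + p) = f := by
    rw [hdet, Stmt14Aux.cat_right]; exact hd2f
  have hdpos : a + p < d := by
    rw [hd]; omega
  -- blocks
  set len : ℕ → ℕ := fun j => if j = 0 then n₀ + P else j * P + d with hlendef
  set seg : ℕ → ℕ → S :=
    fun j => if j = 0 then Stmt14Aux.cat n₀ σ₀ cyc else Stmt14Aux.cat (j * P) cyc det
    with hsegdef
  have hlen0 : len 0 = n₀ + P := by simp [hlendef]
  have hlenS : ∀ k : ℕ, len (k + 1) = (k + 1) * P + d := fun k => by simp [hlendef]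
  have hseg0 : seg 0 = Stmt14Aux.cat n₀ σ₀ cyc := by simp [hsegdef]
  have hsegS : ∀ k : ℕ, seg (k + 1) = Stmt14Aux.cat ((k + 1) * P) cyc det :=
    fun k => by simp [hsegdef]
  have hlen : ∀ j, 0 < len j := by
    rintro (_ | k)
    · rw [hlen0]; omega
    · rw [hlenS]; omega
  have hpath : ∀ j, Stmt14Aux.IsPath T (len j) (seg j) := by
    rintro (_ | k)
    · rw [hlen0, hseg0]
      exact Stmt14Aux.cat_isPath hσpath (hcycP P) (by rw [hcyc0, hσn])
    · rw [hlenS, hsegS]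
      exact Stmt14Aux.cat_isPath (hcycP _) hdetpath (by rw [hdet0, hcycmul (k + 1)])
  have hglue : ∀ j, seg (j + 1) 0 = seg j (len j) := by
    have hstart : ∀ k : ℕ, seg (k + 1) 0 = κ 0 := by
      intro k
      rw [hsegS]
      rw [Stmt14Aux.cat_zero (by rw [hdet0, hcycmul (k + 1)])]
      exact hcyc0
    have hend : ∀ j, seg j (len j) = κ 0 := by
      rintro (_ | k)
      · rw [hlen0, hseg0, Stmt14Aux.cat_right]
        simp [hcyc, Nat.mod_self]
      · rw [hlenS, hsegS, Stmt14Aux.cat_right]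
        exact hdetend
    intro j; rw [hstart, hend]
  set ρ : ℕ → S := Stmt14Aux.runOf len seg with hρdef
  have hρat : ∀ {j r : ℕ}, r < len j → ρ (Stmt14Aux.cum len j + r) = seg j r := by
    intro j r h
    rw [hρdef]
    exact Stmt14Aux.runOf_at hlen seg h
  refine ⟨ρ, ?_, ?_, ?_, ?_, ?_⟩
  · -- starts at s₀
    have h0 : (0 : ℕ) = Stmt14Aux.cum len 0 + 0 := by simp [Stmt14Aux.cum]
    rw [h0, hρat (hlen 0), hseg0, Stmt14Aux.cat_zero (by rw [hcyc0, hσn])]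
    exact hσ0
  · -- is a run
    intro i
    rw [hρdef]
    exact Stmt14Aux.runOf_isRun hlen hpath hglue i
  · -- F infinitely often
    intro N
    have hoff : (N + 1) * P + (a + p) < len (N + 1) := by rw [hlenS]; omega
    refine ⟨Stmt14Aux.cum len (N + 1) + ((N + 1) * P + (a + p)), ?_, ?_⟩
    · have := Stmt14Aux.le_cum hlen (N + 1)
      omega
    · rw [hρat hoff, hsegS, Stmt14Aux.cat_right, hdetf]
      exact hf
  · -- M infinitely often
    intro N
    have hiP : i₀ < (N + 1) * P :=
      lt_of_lt_of_le (show i₀ < P by omega) (Nat.le_mul_of_pos_left P (by omega))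
    have hoff : i₀ < len (N + 1) := by rw [hlenS]; omega
    refine ⟨Stmt14Aux.cum len (N + 1) + i₀, ?_, ?_⟩
    · have := Stmt14Aux.le_cum hlen (N + 1)
      omega
    · rw [hρat hoff, hsegS, Stmt14Aux.cat_left hiP]
      show κ (i₀ % P) ∈ M
      rw [Nat.mod_eq_of_lt (by omega)]
      exact hi₀M
  · -- the limsup bound
    set ind : S → ℝ := fun x => if x ∈ M then 1 else 0 with hind
    have hind0 : ∀ x, 0 ≤ ind x := by
      intro x; rw [hind]; dsimp only; split <;> norm_num
    have hncard : ∀ (g : ℕ → S) (n : ℕ),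
        (({i : ℕ | i ≤ n ∧ g i ∈ M}.ncard : ℝ)) = ∑ i ∈ Finset.range (n + 1), ind (g i) := by
      intro g n
      have hset : {i : ℕ | i ≤ n ∧ g i ∈ M}
          = ↑((Finset.range (n + 1)).filter (fun i => g i ∈ M)) := by
        ext i; simp [Nat.lt_succ_iff]
      rw [hset, Set.ncard_coe_finset, Finset.natCast_card_filter]
    have hfun : (fun n : ℕ => (∑ i ∈ Finset.range (n + 1), c (ρ i)) /
          (({i : ℕ | i ≤ n ∧ ρ i ∈ M}.ncard : ℝ)))
        = fun n : ℕ => (∑ i ∈ Finset.range (n + 1), c (ρ i)) /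
          (∑ i ∈ Finset.range (n + 1), ind (ρ i)) := funext fun n => by rw [hncard ρ n]
    rw [hfun]
    set Cκ : ℝ := ∑ i ∈ Finset.range P, c (κ i) with hCκdef
    set Vr : ℝ := ∑ i ∈ Finset.range P, ind (κ i) with hVrdef
    set Dc : ℝ := ∑ r ∈ Finset.range d, c (det r) with hDcdef
    set Pc : ℝ := ∑ r ∈ Finset.range n₀, c (σ₀ r) with hPcdef
    have hCκ0 : 0 ≤ Cκ := by rw [hCκdef]; exact Finset.sum_nonneg fun i _ => hc _
    have hDc0 : 0 ≤ Dc := by rw [hDcdef]; exact Finset.sum_nonneg fun i _ => hc _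
    have hPc0 : 0 ≤ Pc := by rw [hPcdef]; exact Finset.sum_nonneg fun i _ => hc _
    have hV1 : 1 ≤ Vr := by
      rw [hVrdef]
      calc (1 : ℝ) = ind (κ i₀) := by simp [hind, hi₀M]
      _ ≤ _ := Finset.single_le_sum (fun i _ => hind0 _)
          (Finset.mem_range.mpr (by omega : i₀ < P))
    have hVpos : 0 < Vr := lt_of_lt_of_le one_pos hV1
    have hγ' : γ = Cκ / Vr := by
      rw [hγ]
      unfold psRatio
      rw [hncard κ m, hCκdef, hVrdef, hP]
    have hγ0 : 0 ≤ γ := by rw [hγ']; exact div_nonneg hCκ0 hVpos.le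
    have hCV : Cκ = γ * Vr := by rw [hγ']; field_simp
    have hρsum : ∀ (g : S → ℝ) (j : ℕ),
        ∑ i ∈ Finset.range (Stmt14Aux.cum len j), g (ρ i)
          = ∑ t ∈ Finset.range j, ∑ r ∈ Finset.range (len t), g (seg t r) := by
      intro g j
      rw [hρdef]
      exact Stmt14Aux.sum_runOf hlen seg g j
    have hcyclesum : ∀ (g : S → ℝ) (k : ℕ),
        ∑ r ∈ Finset.range (k * P), g (cyc r) = (k : ℝ) * ∑ i ∈ Finset.range P, g (κ i) := by
      intro g k
      simp only [hcyc]
      exact Stmt14Aux.sum_mod (fun i => g (κ i)) P k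
    have hblc0 : ∑ r ∈ Finset.range (len 0), c (seg 0 r) = Pc + Cκ := by
      rw [hlen0, hseg0, Stmt14Aux.sum_cat]
      have h1 : ∑ r ∈ Finset.range P, c (cyc r) = Cκ := by
        have h := hcyclesum c 1
        rw [one_mul] at h
        rw [hCκdef]
        simpa using h
      rw [h1, ← hPcdef]
    have hblcS : ∀ k : ℕ, ∑ r ∈ Finset.range (len (k + 1)), c (seg (k + 1) r)
        = ((k : ℝ) + 1) * Cκ + Dc := by
      intro k
      rw [hlenS, hsegS, Stmt14Aux.sum_cat, hcyclesum c (k + 1), ← hDcdef, ← hCκdef]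
      push_cast
      ring
    have hbli0 : Vr ≤ ∑ r ∈ Finset.range (len 0), ind (seg 0 r) := by
      rw [hlen0, hseg0, Stmt14Aux.sum_cat]
      have h1 : ∑ r ∈ Finset.range P, ind (cyc r) = Vr := by
        have h := hcyclesum ind 1
        rw [one_mul] at h
        rw [hVrdef]
        simpa using h
      have h2 : 0 ≤ ∑ r ∈ Finset.range n₀, ind (σ₀ r) :=
        Finset.sum_nonneg fun i _ => hind0 _
      linarith
    have hbliS : ∀ k : ℕ, ((k : ℝ) + 1) * Vr
        ≤ ∑ r ∈ Finset.range (len (k + 1)), ind (seg (k + 1) r) := by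
      intro k
      rw [hlenS, hsegS, Stmt14Aux.sum_cat, hcyclesum ind (k + 1), ← hVrdef]
      have h2 : 0 ≤ ∑ r ∈ Finset.range d, ind (det r) :=
        Finset.sum_nonneg fun i _ => hind0 _
      push_cast
      linarith
    set Tri : ℕ → ℝ := fun j => ∑ k ∈ Finset.range j, ((k : ℝ) + 1) with hTridef
    have hTriEq : ∀ j : ℕ, Tri j = ∑ k ∈ Finset.range j, ((k : ℝ) + 1) :=
      fun j => by rw [hTridef]
    have hTri0 : ∀ j, 0 ≤ Tri j := fun j => by
      rw [hTriEq]; exact Finset.sum_nonneg fun k _ => by positivity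
    have hTriS : ∀ j : ℕ, Tri (j + 1) = Tri j + ((j : ℝ) + 1) := fun j => by
      rw [hTriEq, hTriEq, Finset.sum_range_succ]
    have hTri2 : ∀ j : ℕ, 2 * Tri j = (j : ℝ) * ((j : ℝ) + 1) := by
      intro j
      induction j with
      | zero => simp [hTriEq]
      | succ j ih =>
        rw [hTriS]
        push_cast
        nlinarith [ih]
    have hcost : ∀ j : ℕ, ∑ i ∈ Finset.range (Stmt14Aux.cum len (j + 1)), c (ρ i)
        = Pc + Cκ + (Cκ * Tri j + (j : ℝ) * Dc) := by
      intro j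
      rw [hρsum c (j + 1), Finset.sum_range_succ', hblc0]
      have h1 : ∑ t ∈ Finset.range j, ∑ r ∈ Finset.range (len (t + 1)), c (seg (t + 1) r)
          = Cκ * Tri j + (j : ℝ) * Dc := by
        rw [Finset.sum_congr rfl fun t _ => hblcS t, Finset.sum_add_distrib,
          Finset.sum_const, Finset.card_range, ← Finset.sum_mul, ← hTriEq,
          nsmul_eq_mul]
        ring
      rw [h1]
      ring
    have hcnt : ∀ s : ℕ, (1 + Tri s) * Vr
        ≤ ∑ i ∈ Finset.range (Stmt14Aux.cum len (s + 1)), ind (ρ i) := by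
      intro s
      rw [hρsum ind (s + 1), Finset.sum_range_succ']
      have h1 : Tri s * Vr
          ≤ ∑ t ∈ Finset.range s, ∑ r ∈ Finset.range (len (t + 1)), ind (seg (t + 1) r) := by
        rw [hTriEq, Finset.sum_mul]
        exact Finset.sum_le_sum fun t _ => hbliS t
      have h2 := hbli0
      have h3 : (1 + Tri s) * Vr = Vr + Tri s * Vr := by ring
      linarith
    have key : ∀ ε : ℝ, 0 < ε → ∀ᶠ n in atTop,
        (∑ i ∈ Finset.range (n + 1), c (ρ i)) / (∑ i ∈ Finset.range (n + 1), ind (ρ i))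
          ≤ γ + ε := by
      intro ε hε
      obtain ⟨N₁, hN₁⟩ := exists_nat_gt (2 * (γ * Vr + Dc + Pc) / (Vr * ε))
      rw [eventually_atTop]
      refine ⟨Stmt14Aux.cum len (N₁ + 2), fun n hn => ?_⟩
      obtain ⟨j, r, hr, hnj⟩ := Stmt14Aux.exists_decomp hlen n
      have hcumsucc : Stmt14Aux.cum len (j + 1) = Stmt14Aux.cum len j + len j :=
        Finset.sum_range_succ _ _
      have hjge : N₁ + 2 ≤ j := by
        by_contra hcon
        push_neg at hcon
        have h1 : Stmt14Aux.cum len (j + 1) ≤ Stmt14Aux.cum len (N₁ + 2) :=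
          Stmt14Aux.cum_mono (by omega)
        omega
      obtain ⟨s, rfl⟩ : ∃ s, j = s + 1 := ⟨j - 1, by omega⟩
      have hcumsucc2 : Stmt14Aux.cum len (s + 2) = Stmt14Aux.cum len (s + 1) + len (s + 1) :=
        Finset.sum_range_succ _ _
      have hnA : n + 1 ≤ Stmt14Aux.cum len (s + 2) := by omega
      have hnB : Stmt14Aux.cum len (s + 1) ≤ n + 1 := by omega
      have hnum : ∑ i ∈ Finset.range (n + 1), c (ρ i)
          ≤ Pc + Cκ + (Cκ * Tri (s + 1) + ((s + 1 : ℕ) : ℝ) * Dc) := by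
        rw [← hcost (s + 1)]
        exact Stmt14Aux.sum_comp_mono hc hnA
      have hden : (1 + Tri s) * Vr ≤ ∑ i ∈ Finset.range (n + 1), ind (ρ i) :=
        le_trans (hcnt s) (Stmt14Aux.sum_comp_mono hind0 hnB)
      have hdenpos : (0 : ℝ) < (1 + Tri s) * Vr :=
        mul_pos (by linarith [hTri0 s]) hVpos
      have hdenpos' : 0 < ∑ i ∈ Finset.range (n + 1), ind (ρ i) :=
        lt_of_lt_of_le hdenpos hden
      rw [div_le_iff₀ hdenpos']
      have hsge : (N₁ : ℝ) ≤ (s : ℝ) := Nat.cast_le.mpr (by omega)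
      have h2K : 2 * (γ * Vr + Dc + Pc) < (s : ℝ) * (Vr * ε) := by
        have h := (div_lt_iff₀ (mul_pos hVpos hε)).mp (lt_of_lt_of_le hN₁ hsge)
        linarith
      have e1 : ((s : ℝ) + 1) * (2 * (γ * Vr + Dc + Pc)) < 2 * Tri s * (Vr * ε) := by
        calc ((s : ℝ) + 1) * (2 * (γ * Vr + Dc + Pc))
            < ((s : ℝ) + 1) * ((s : ℝ) * (Vr * ε)) :=
              mul_lt_mul_of_pos_left h2K (by positivity)
        _ = 2 * Tri s * (Vr * ε) := by rw [hTri2 s]; ring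
      have hmid : Pc + Cκ + (Cκ * Tri (s + 1) + ((s + 1 : ℕ) : ℝ) * Dc)
          ≤ (γ + ε) * ((1 + Tri s) * Vr) := by
        rw [hCV, hTriS]
        push_cast
        linarith [e1, mul_nonneg (show (0:ℝ) ≤ (s:ℝ) by positivity) hPc0,
          mul_pos hε hVpos, hTri0 s]
      calc ∑ i ∈ Finset.range (n + 1), c (ρ i)
          ≤ Pc + Cκ + (Cκ * Tri (s + 1) + ((s + 1 : ℕ) : ℝ) * Dc) := hnum
      _ ≤ (γ + ε) * ((1 + Tri s) * Vr) := hmid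
      _ ≤ (γ + ε) * (∑ i ∈ Finset.range (n + 1), ind (ρ i)) :=
          mul_le_mul_of_nonneg_left hden (by linarith)
    have hnonneg : ∀ n : ℕ, (0:ℝ) ≤ (∑ i ∈ Finset.range (n + 1), c (ρ i)) /
        (∑ i ∈ Finset.range (n + 1), ind (ρ i)) :=
      fun n => div_nonneg (Finset.sum_nonneg fun i _ => hc _)
        (Finset.sum_nonneg fun i _ => hind0 _)
    have hcb : IsCoboundedUnder (· ≤ ·) atTop (fun n : ℕ =>
        (∑ i ∈ Finset.range (n + 1), c (ρ i)) / (∑ i ∈ Finset.range (n + 1), ind (ρ i))) :=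
      isCoboundedUnder_le_of_le atTop hnonneg
    by_contra hcon
    push_neg at hcon
    set Ls := limsup (fun n : ℕ =>
        (∑ i ∈ Finset.range (n + 1), c (ρ i)) / (∑ i ∈ Finset.range (n + 1), ind (ρ i))) atTop
      with hLs
    have h1 : Ls ≤ γ + (Ls - γ) / 2 :=
      limsup_le_of_le hcb (key ((Ls - γ) / 2) (by linarith))
    linarith
end
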